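/- Let G be a finite graph, B a complete block of G, and u, u' two vertices of B neither of which is a cut vertex of G. Then u and u' are twins, i.e. N(u) \ {u'} = N(u') \ {u}, and consequently e(u) = e(u'). -/

import Mathlib

open SimpleGraph

variable {V : Type*}

/-- The eccentricity of a vertex: the maximum graph distance to any other vertex. -/
noncomputable def ecc (G : SimpleGraph V) [Fintype V] (v : V) : ℕ :=
  Finset.univ.sup (G.dist v)

/-- The centre of a graph: the set of vertices of minimum eccentricity. -/
def graphCenter (G : SimpleGraph V) [Fintype V] : Set V :=
  {v | ∀ u : V, ecc G v ≤ ecc G u}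

/-- A cut vertex: removing it increases the number of connected components
(with the convention that the unique vertex of a one-vertex graph is a cut vertex). -/
def IsCutVertex (G : SimpleGraph V) (v : V) : Prop :=
  (∀ w : V, w = v) ∨
    Nat.card G.ConnectedComponent < Nat.card (G.induce {v}ᶜ).ConnectedComponent

/-- A (finite, simple, loopless) graph is 2-connected if deleting any vertex
leaves it connected. -/
def IsTwoConnectedGraph (G : SimpleGraph V) : Prop :=
  ∀ v : V, (G.induce {v}ᶜ).Connected

/-- A block of `G`: (the vertex set of) a maximal 2-connected subgraph. -/
def IsBlock (G : SimpleGraph V) (B : Set V) : Prop :=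
  IsTwoConnectedGraph (G.induce B) ∧
    ∀ C : Set V, B ⊆ C → IsTwoConnectedGraph (G.induce C) → C = B

/-- A complete block: a block inducing a complete subgraph. -/
def IsCompleteBlock (G : SimpleGraph V) (B : Set V) : Prop :=
  IsBlock G B ∧ ∀ x ∈ B, ∀ y ∈ B, x ≠ y → G.Adj x y

/-- A block graph: all blocks are complete. -/
def IsBlockGraph (G : SimpleGraph V) : Prop :=
  ∀ B : Set V, IsBlock G B → ∀ x ∈ B, ∀ y ∈ B, x ≠ y → G.Adj x y

lemma reach_induce {G : SimpleGraph V} {S : Set V} {x y : V} (p : G.Walk x y)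
    (h : ∀ z ∈ p.support, z ∈ S) (hx : x ∈ S) (hy : y ∈ S) :
    (G.induce S).Reachable ⟨x, hx⟩ ⟨y, hy⟩ := by
  induction p with
  | nil => exact Reachable.refl _
  | @cons a b c hadj q ih =>
    have hb : b ∈ S := h b (by simp [SimpleGraph.Walk.support_cons])
    refine Reachable.trans ?_ (ih (fun z hz => h z (by simp [SimpleGraph.Walk.support_cons, hz])) hb hy)
    exact SimpleGraph.Adj.reachable (show (G.induce S).Adj ⟨a, hx⟩ ⟨b, hb⟩ from hadj)

def dblIso (G : SimpleGraph V) (C : Set V) (v : ↑C) :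
    ((G.induce C).induce {v}ᶜ) ≃g G.induce (C \ {(v : V)}) where
  toFun x := ⟨x.1.1, x.1.2, fun h => x.2 (Subtype.ext h)⟩
  invFun y := ⟨⟨y.1, y.2.1⟩, fun h => y.2.2 (congrArg Subtype.val h)⟩
  left_inv _ := rfl
  right_inv _ := rfl
  map_rel_iff' := Iff.rfl

lemma nbr_mem_block [Fintype V] (G : SimpleGraph V) (B : Set V) (hB : IsCompleteBlock G B)
    (u u' : V) (hu : u ∈ B) (hu' : u' ∈ B) (hne : u ≠ u') (hucut : ¬ IsCutVertex G u)
    {w : V} (hadj : G.Adj u w) : w ∈ B := by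
  classical
  by_contra hwB
  have hwD : w ∈ ({u}ᶜ : Set V) := hadj.ne'
  have hu'D : u' ∈ ({u}ᶜ : Set V) := Ne.symm hne
  by_cases hreach : (G.induce ({u}ᶜ : Set V)).Reachable ⟨w, hwD⟩ ⟨u', hu'D⟩
  · -- build a bigger 2-connected set, contradicting maximality
    obtain ⟨q, hq⟩ : ∃ q : (G.induce ({u}ᶜ : Set V)).Walk ⟨w, hwD⟩ ⟨u', hu'D⟩, q.IsPath := by
      obtain ⟨q0⟩ := hreach
      exact ⟨q0.toPath.1, q0.toPath.2⟩
    let P : G.Walk w u' := q.map (Embedding.induce ({u}ᶜ : Set V)).toHom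
    have hP : P.IsPath := Walk.map_isPath_of_injective (Embedding.induce (G := G) ({u}ᶜ : Set V)).injective hq
    have hPD : ∀ z ∈ P.support, z ≠ u := by
      intro z hz
      rw [show P.support = _ from Walk.support_map _ _] at hz
      obtain ⟨t, _, rfl⟩ := List.mem_map.mp hz
      exact t.2
    set C : Set V := B ∪ {z | z ∈ P.support} with hC
    have hBC : B ⊆ C := Set.subset_union_left
    have hwC : w ∈ C := Or.inr P.start_mem_support
    have htwo : IsTwoConnectedGraph (G.induce C) := by
      intro v
      rw [Iso.connected_iff (dblIso G C v)]
      set a : V := (v : V) with ha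
      obtain ⟨h0, hh0B, hh0a⟩ : ∃ h0, h0 ∈ B ∧ h0 ≠ a := by
        by_cases hau : a = u
        · exact ⟨u', hu', fun h => hne (hau.symm.trans h.symm)⟩
        · exact ⟨u, hu, fun h => hau h.symm⟩
      have hh0 : h0 ∈ C \ {a} := ⟨hBC hh0B, hh0a⟩
      have reachB : ∀ r (hrB : r ∈ B) (hra : r ≠ a),
          (G.induce (C \ {a})).Reachable ⟨r, ⟨hBC hrB, hra⟩⟩ ⟨h0, hh0⟩ := by
        intro r hrB hra
        by_cases hr0 : r = h0
        · subst hr0; exact Reachable.refl _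
        · exact SimpleGraph.Adj.reachable
            (show (G.induce (C \ {a})).Adj ⟨r, _⟩ ⟨h0, _⟩ from hB.2 r hrB h0 hh0B hr0)
      have main : ∀ (x : V) (hx : x ∈ C \ {a}),
          (G.induce (C \ {a})).Reachable ⟨x, hx⟩ ⟨h0, hh0⟩ := by
        intro x hx
        rcases hx.1 with hxB | hxP
        · exact reachB x hxB hx.2
        · set q1 := P.takeUntil x hxP with hq1
          set q2 := P.dropUntil x hxP with hq2
          have hnodup : (q1.support ++ q2.support.tail).Nodup := by
            rw [← Walk.support_append, Walk.take_spec]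
            exact hP.support_nodup
          by_cases ha2 : a ∈ q2.support
          · -- go backwards to w, then step to u
            have ha2t : a ∈ q2.support.tail := by
              rw [Walk.support_eq_cons] at ha2
              rcases List.mem_cons.mp ha2 with h | h
              · exact absurd h.symm hx.2
              · exact h
            have ha1 : a ∉ q1.support := fun h =>
              (List.disjoint_of_nodup_append hnodup) h ha2t
            have hua : u ≠ a := fun h =>
              hPD a (Walk.support_dropUntil_subset _ _ ha2) h.symm
            have hq1S : ∀ z ∈ q1.reverse.support, z ∈ C \ {a} := by
              intro z hz
              rw [Walk.support_reverse, List.mem_reverse] at hz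
              exact ⟨Or.inr (Walk.support_takeUntil_subset _ _ hz), fun h => ha1 (h ▸ hz)⟩
            have hwa : w ∈ C \ {a} :=
              ⟨hwC, fun h => ha1 (h ▸ q1.start_mem_support)⟩
            have hva : u ∈ C \ {a} := ⟨hBC hu, hua⟩
            have r1 : (G.induce (C \ {a})).Reachable ⟨x, hx⟩ ⟨w, hwa⟩ :=
              reach_induce q1.reverse hq1S hx hwa
            have r2 : (G.induce (C \ {a})).Reachable ⟨w, hwa⟩ ⟨u, hva⟩ :=
              SimpleGraph.Adj.reachable
                (show (G.induce (C \ {a})).Adj ⟨w, hwa⟩ ⟨u, hva⟩ from hadj.symm)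
            exact (r1.trans r2).trans (reachB u hu hua)
          · -- go forwards to u'
            have hq2S : ∀ z ∈ q2.support, z ∈ C \ {a} := fun z hz =>
              ⟨Or.inr (Walk.support_dropUntil_subset _ _ hz), fun h => ha2 (h ▸ hz)⟩
            have hu'a : u' ≠ a := fun h => ha2 (h ▸ q2.end_mem_support)
            have r := reach_induce q2 hq2S hx ⟨hBC hu', hu'a⟩
            exact r.trans (reachB u' hu' hu'a)
      rw [connected_iff_exists_forall_reachable]
      exact ⟨⟨h0, hh0⟩, fun x => (main x.1 x.2).symm⟩
    exact hwB ((hB.1.2 C hBC htwo) ▸ hwC)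
  · -- u is a cut vertex : contradiction
    apply hucut
    right
    set f : (G.induce ({u}ᶜ : Set V)).ConnectedComponent → G.ConnectedComponent :=
      ConnectedComponent.map (Embedding.induce ({u}ᶜ : Set V)).toHom with hf
    have hfin : Finite (G.induce ({u}ᶜ : Set V)).ConnectedComponent :=
      Finite.of_surjective _ (fun c => c.exists_rep)
    have hfin' : Finite G.ConnectedComponent :=
      Finite.of_surjective _ (fun c => (c.exists_rep))
    have hsurj : Function.Surjective f := by
      intro c
      induction c using SimpleGraph.ConnectedComponent.ind with
      | _ v =>
        by_cases hv : v = u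
        · refine ⟨SimpleGraph.connectedComponentMk _ ⟨u', hu'D⟩, ?_⟩
          rw [hf, ConnectedComponent.map_mk]
          exact ConnectedComponent.sound
            (by rw [hv]; exact (hB.2 u hu u' hu' hne).symm.reachable)
        · exact ⟨SimpleGraph.connectedComponentMk _ ⟨v, hv⟩,
by rw [hf, ConnectedComponent.map_mk]; rfl⟩
    by_contra hlt
    push_neg at hlt
    have h1 : Nat.card G.ConnectedComponent
        ≤ Nat.card (G.induce ({u}ᶜ : Set V)).ConnectedComponent :=
      Nat.card_le_card_of_surjective f hsurj
    have hbij : Function.Bijective f :=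
      (Nat.bijective_iff_surjective_and_card f).mpr ⟨hsurj, le_antisymm hlt h1⟩
    apply hreach
    have heq : f (SimpleGraph.connectedComponentMk _ ⟨w, hwD⟩)
        = f (SimpleGraph.connectedComponentMk _ ⟨u', hu'D⟩) := by
      rw [hf, ConnectedComponent.map_mk, ConnectedComponent.map_mk]
      exact ConnectedComponent.sound (hadj.symm.reachable.trans (hB.2 u hu u' hu' hne).reachable)
    exact (SimpleGraph.ConnectedComponent.eq).mp (hbij.1 heq)


lemma ecc_le_of_twin [Fintype V] (G : SimpleGraph V) {x y : V} (hxy : G.Adj x y)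
    (hN : G.neighborSet x \ {y} = G.neighborSet y \ {x}) : ecc G x ≤ ecc G y := by
  apply Finset.sup_le
  intro v _
  by_cases hvx : v = x
  · simp [hvx, SimpleGraph.dist_self]
  by_cases hvy : v = y
  · subst hvy
    have h1 : G.dist x v = 1 := dist_eq_one_iff_adj.mpr hxy
    have h2 : G.dist v x = 1 := dist_eq_one_iff_adj.mpr hxy.symm
    rw [h1, ← h2]
    exact Finset.le_sup (Finset.mem_univ x)
  · have hle : G.dist x v ≤ G.dist y v := by
      by_cases hr : G.Reachable y v
      · obtain ⟨p, hp⟩ := hr.exists_walk_length_eq_dist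
        cases p with
        | nil => exact absurd rfl (Ne.symm hvy)
        | @cons _ z _ h' q =>
          by_cases hzx : z = x
          · subst hzx
            calc G.dist z v ≤ q.length := dist_le q
            _ ≤ q.length + 1 := Nat.le_succ _
            _ = G.dist y v := hp
          · have hz : z ∈ G.neighborSet x \ {y} := by
              rw [hN]; exact ⟨h', hzx⟩
            have hxz : G.Adj x z := hz.1
            calc G.dist x v ≤ (Walk.cons hxz q).length := dist_le _
            _ = G.dist y v := hp
      · rw [dist_eq_zero_of_not_reachable hr,
          dist_eq_zero_of_not_reachable (fun h => hr (hxy.symm.reachable.trans h))]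
    exact hle.trans (Finset.le_sup (Finset.mem_univ v))

/-- two non-cut vertices of a complete block are twins, and hence
have equal eccentricity. -/
theorem stmt_6 [Fintype V] (G : SimpleGraph V)
    (B : Set V) (hB : IsCompleteBlock G B)
    (u u' : V) (hu : u ∈ B) (hu' : u' ∈ B) (hne : u ≠ u')
    (hucut : ¬ IsCutVertex G u) (hu'cut : ¬ IsCutVertex G u') :
    G.neighborSet u \ {u'} = G.neighborSet u' \ {u} ∧ ecc G u = ecc G u' := by
  classical
  have hadj : G.Adj u u' := hB.2 u hu u' hu' hne
  have hNu : ∀ ⦃z⦄, z ∈ G.neighborSet u → z ∈ B := fun z hz =>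
    nbr_mem_block G B hB u u' hu hu' hne hucut hz
  have hNu' : ∀ ⦃z⦄, z ∈ G.neighborSet u' → z ∈ B := fun z hz =>
    nbr_mem_block G B hB u' u hu' hu hne.symm hu'cut hz
  have hset : G.neighborSet u \ {u'} = G.neighborSet u' \ {u} := by
    ext x
    simp only [Set.mem_diff, mem_neighborSet, Set.mem_singleton_iff]
    constructor
    · rintro ⟨h1, h2⟩
      exact ⟨hB.2 u' hu' x (hNu h1) (fun h => h2 h.symm), fun h => h1.ne (h.symm)⟩
    · rintro ⟨h1, h2⟩
      exact ⟨hB.2 u hu x (hNu' h1) (fun h => h2 h.symm), fun h => h1.ne (h.symm)⟩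
  exact ⟨hset, le_antisymm (ecc_le_of_twin G hadj hset)
    (ecc_le_of_twin G hadj.symm hset.symm)⟩
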